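/- Let G and H be finite simple graphs and let C₁ and C₂ be two clique covers of G with |C₁| = |C₂| = k such that there is a bijection between C₁ and C₂ matching cliques of equal cardinality. Then D(G^{C₁} ⋆ H, x) = D(G^{C₂} ⋆ H, x). -/

import Mathlib

open Polynomial

variable {V W : Type*}

/-- `S` is a dominating set of `G`. -/
def Dominates (G : SimpleGraph V) (S : Finset V) : Prop :=
  ∀ v, v ∉ S → ∃ u ∈ S, G.Adj u v

open Classical in
/-- The domination polynomial of a finite simple graph. -/
noncomputable def domPoly [Fintype V] (G : SimpleGraph V) : Polynomial ℤ :=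
  ∑ S : Finset V, if Dominates G S then (X : Polynomial ℤ) ^ S.card else 0

/-- The clique cover product `G^C ⋆ H^U`. -/
def cliqueCoverProduct (G : SimpleGraph V) (H : SimpleGraph W) {k : ℕ}
    (C : Fin k → Finset V) (U : Set W) : SimpleGraph (V ⊕ Fin k × W) where
  Adj x y :=
    match x, y with
    | Sum.inl a, Sum.inl b => G.Adj a b
    | Sum.inl a, Sum.inr (i, w) => a ∈ C i ∧ w ∈ U
    | Sum.inr (i, w), Sum.inl a => a ∈ C i ∧ w ∈ U
    | Sum.inr (i, w), Sum.inr (j, w') => i = j ∧ H.Adj w w'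
  symm := by
    constructor
    rintro (a | ⟨i, w⟩) (b | ⟨j, w'⟩) h
    · exact G.adj_symm h
    · exact h
    · exact h
    · exact ⟨h.1.symm, H.adj_symm h.2⟩
  loopless := by
    constructor
    rintro (a | ⟨i, w⟩) h
    · exact G.irrefl h
    · exact H.irrefl h.2

/-- `C` is a clique cover of `G`: a partition of the vertices into cliques. -/
def IsCliqueCover (G : SimpleGraph V) {k : ℕ} (C : Fin k → Finset V) : Prop :=
  (∀ i, (C i).Nonempty) ∧ (∀ v, ∃! i, v ∈ C i) ∧ ∀ i, G.IsClique (C i : Set V)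

/-!
If `H` has a vertex, a set `S` dominates `G^C ⋆ H` exactly when, for every clique `Cᵢ`, either
`S` meets `Cᵢ` or `S` dominates the `i`-th copy of `H` on its own: in the second case `S` has a
vertex in that copy, which is adjacent to all of `Cᵢ`. This criterion ignores the edges of `G`
between different cliques, so it is transported by any bijection of `V` carrying each clique of
`C₁` onto the matched clique of `C₂` (which exists because matched cliques have equal sizes),
extended by permuting the copies of `H` along the matching. Being a bijection, it preserves the
sizes of dominating sets. If `H` is empty, both products are just `G`.
-/

lemma domPoly_eq_of_dominates_iff {V V' : Type*} [Fintype V] [Fintype V']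
    {G : SimpleGraph V} {G' : SimpleGraph V'} (e : V ≃ V')
    (h : ∀ S, Dominates G S ↔ Dominates G' (S.map e.toEmbedding)) :
    domPoly G = domPoly G' := by
  classical
  unfold domPoly
  refine Fintype.sum_equiv e.finsetCongr _ _ fun S => ?_
  rw [Equiv.finsetCongr_apply, Finset.card_map]
  exact if_congr (h S) rfl rfl

lemma exists_equiv_forall_mem_iff {α β ι ι' : Type*} {C₁ : ι → Finset α} {C₂ : ι' → Finset β}
    (h₁ : ∀ a, ∃! i, a ∈ C₁ i) (h₂ : ∀ b, ∃! i, b ∈ C₂ i)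
    (σ : ι ≃ ι') (hσ : ∀ i, (C₁ i).card = (C₂ (σ i)).card) :
    ∃ τ : α ≃ β, ∀ i a, a ∈ C₁ i ↔ τ a ∈ C₂ (σ i) := by
  choose p₁ hp₁ using h₁
  choose p₂ hp₂ using h₂
  have hp₁_eq : ∀ a i, p₁ a = i ↔ a ∈ C₁ i :=
    fun a i => ⟨fun h => h ▸ (hp₁ a).1, fun h => ((hp₁ a).2 i h).symm⟩
  have hp₂_eq : ∀ b i, p₂ b = i ↔ b ∈ C₂ i :=
    fun b i => ⟨fun h => h ▸ (hp₂ b).1, fun h => ((hp₂ b).2 i h).symm⟩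
  -- `τ` is glued from bijections between matched parts, fibred over the parts of `β`
  let e : ∀ j, {a // σ (p₁ a) = j} ≃ {b // p₂ b = j} := fun j =>
    (Equiv.subtypeEquivRight fun a => by rw [← σ.eq_symm_apply, hp₁_eq]).trans <|
      (Finset.equivOfCardEq (by rw [hσ, σ.apply_symm_apply])).trans <|
        Equiv.subtypeEquivRight fun b => (hp₂_eq b j).symm
  refine ⟨Equiv.ofFiberEquiv e, fun i a => ?_⟩
  rw [← hp₁_eq, ← hp₂_eq, Equiv.ofFiberEquiv_map (g := p₂) e, σ.apply_eq_iff_eq]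

lemma Dominates.nonempty [Nonempty V] {G : SimpleGraph V} {S : Finset V} (h : Dominates G S) :
    S.Nonempty := by
  obtain ⟨v⟩ := ‹Nonempty V›
  by_cases hv : v ∈ S
  · exact ⟨v, hv⟩
  · obtain ⟨u, hu, -⟩ := h v hv
    exact ⟨u, hu⟩

section CliqueCoverProduct

variable {k : ℕ} {G : SimpleGraph V} {H : SimpleGraph W} {C : Fin k → Finset V} {U : Set W}

@[simp]
lemma cliqueCoverProduct_adj_inl_inr {a : V} {i : Fin k} {w : W} :
    (cliqueCoverProduct G H C U).Adj (.inl a) (.inr (i, w)) ↔ a ∈ C i ∧ w ∈ U :=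
  Iff.rfl

@[simp]
lemma cliqueCoverProduct_adj_inr_inl {a : V} {i : Fin k} {w : W} :
    (cliqueCoverProduct G H C U).Adj (.inr (i, w)) (.inl a) ↔ a ∈ C i ∧ w ∈ U :=
  Iff.rfl

@[simp]
lemma cliqueCoverProduct_adj_inr_inr {i j : Fin k} {w w' : W} :
    (cliqueCoverProduct G H C U).Adj (.inr (i, w)) (.inr (j, w')) ↔ i = j ∧ H.Adj w w' :=
  Iff.rfl

lemma cliqueCoverProduct_eq_of_isEmpty [IsEmpty W] (G : SimpleGraph V) (H : SimpleGraph W)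
    (C C' : Fin k → Finset V) (U U' : Set W) :
    cliqueCoverProduct G H C U = cliqueCoverProduct G H C' U' := by
  ext (a | ⟨_, w⟩) (b | ⟨_, w'⟩)
  · rfl
  all_goals exact isEmptyElim ‹W›

noncomputable def copySlice (S : Finset (V ⊕ Fin k × W)) (i : Fin k) : Finset W :=
  S.preimage (fun w => Sum.inr (i, w)) fun _ _ _ _ h => by simpa using h

@[simp]
lemma mem_copySlice {S : Finset (V ⊕ Fin k × W)} {i : Fin k} {w : W} :
    w ∈ copySlice S i ↔ Sum.inr (i, w) ∈ S :=
  Finset.mem_preimage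

lemma dominates_cliqueCoverProduct_iff [Nonempty W] (hcover : ∀ v, ∃ i, v ∈ C i)
    (hclique : ∀ i, G.IsClique (C i : Set V)) (S : Finset (V ⊕ Fin k × W)) :
    Dominates (cliqueCoverProduct G H C Set.univ) S ↔
      ∀ i, (∃ v ∈ C i, Sum.inl v ∈ S) ∨ Dominates H (copySlice S i) := by
  constructor
  · intro hS i
    refine or_iff_not_imp_left.mpr fun hC w hw => ?_
    obtain ⟨u | ⟨j, u⟩, huS, hadj⟩ := hS _ (mem_copySlice.not.mp hw)
    · exact absurd ⟨u, hadj.1, huS⟩ hC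
    · obtain ⟨rfl, hadj⟩ := hadj
      exact ⟨u, mem_copySlice.mpr huS, hadj⟩
  · rintro hS (v | ⟨i, w⟩) hx
    · obtain ⟨i, hvi⟩ := hcover v
      rcases hS i with ⟨u, hui, huS⟩ | hH
      · have huv : u ≠ v := by rintro rfl; exact hx huS
        exact ⟨.inl u, huS, hclique i hui hvi huv⟩
      · obtain ⟨u, hu⟩ := hH.nonempty
        exact ⟨.inr (i, u), mem_copySlice.mp hu, by simpa using hvi⟩
    · rcases hS i with ⟨u, hui, huS⟩ | hH
      · exact ⟨.inl u, huS, by simpa using hui⟩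
      · obtain ⟨u, hu, hadj⟩ := hH w (mem_copySlice.not.mpr hx)
        exact ⟨.inr (i, u), mem_copySlice.mp hu, by simpa using hadj⟩

lemma copySlice_map_sumCongr (τ : V ≃ V) (σ : Equiv.Perm (Fin k)) (S : Finset (V ⊕ Fin k × W))
    (i : Fin k) :
    copySlice (S.map (τ.sumCongr (σ.prodCongr (Equiv.refl W))).toEmbedding) (σ i) =
      copySlice S i := by
  ext w
  simp [Finset.mem_map_equiv]

lemma dominates_cliqueCoverProduct_map_iff [Nonempty W] {C₁ C₂ : Fin k → Finset V}
    (hC₁ : IsCliqueCover G C₁) (hC₂ : IsCliqueCover G C₂) (σ : Equiv.Perm (Fin k))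
    (τ : V ≃ V) (hτ : ∀ i v, v ∈ C₁ i ↔ τ v ∈ C₂ (σ i)) (S : Finset (V ⊕ Fin k × W)) :
    Dominates (cliqueCoverProduct G H C₁ Set.univ) S ↔
      Dominates (cliqueCoverProduct G H C₂ Set.univ)
        (S.map (τ.sumCongr (σ.prodCongr (Equiv.refl W))).toEmbedding) := by
  rw [dominates_cliqueCoverProduct_iff (fun v => (hC₁.2.1 v).exists) hC₁.2.2,
    dominates_cliqueCoverProduct_iff (fun v => (hC₂.2.1 v).exists) hC₂.2.2]
  refine σ.forall_congr fun i => or_congr ?_ (by rw [copySlice_map_sumCongr])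
  refine τ.exists_congr fun v => and_congr (hτ i v) ?_
  simp [Finset.mem_map_equiv]

end CliqueCoverProduct

/-- Two clique covers of `G` whose cliques match up in cardinality
yield clique cover products with the same domination polynomial. -/
theorem domPoly_cliqueCoverProduct_eq {V W : Type*} [Fintype V] [Fintype W]
    (G : SimpleGraph V) (H : SimpleGraph W) {k : ℕ} (C₁ C₂ : Fin k → Finset V)
    (hC₁ : IsCliqueCover G C₁) (hC₂ : IsCliqueCover G C₂)
    (σ : Equiv.Perm (Fin k)) (hσ : ∀ i, (C₁ i).card = (C₂ (σ i)).card) :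
    domPoly (cliqueCoverProduct G H C₁ Set.univ) =
      domPoly (cliqueCoverProduct G H C₂ Set.univ) := by
  cases isEmpty_or_nonempty W with
  | inl _ => rw [cliqueCoverProduct_eq_of_isEmpty G H C₁ C₂]
  | inr _ =>
    obtain ⟨τ, hτ⟩ := exists_equiv_forall_mem_iff hC₁.2.1 hC₂.2.1 σ hσ
    exact domPoly_eq_of_dominates_iff _ (dominates_cliqueCoverProduct_map_iff hC₁ hC₂ σ τ hτ)
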